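/- Let p₁, p₂ ∈ ℝ⁴ be timelike with p₁⁰ > 0 and p₂⁰ > 0 (future-directed massive momenta), and set p₃ := p₁ + p₂. Then the function S(z) := (p₁·Q(z))·ln|p₁·Q(z)| + (p₂·Q(z))·ln|p₂·Q(z)| − (p₃·Q(z))·ln|p₃·Q(z)| is well defined and C^∞ on all of ℂ, and moreover S is a smooth weight-one density: there exists a smooth function Ŝ : ℂ → ℝ with Ŝ(ẑ) = |ẑ|²·S(1/ẑ) for all ẑ ≠ 0, i.e. z ↦ |ẑ|²S(1/ẑ) extends smoothly through ẑ = 0 (smoothness at the point at infinity of the celestial sphere). (This is the smooth-density statement of the soft part produced when adding two massive hard supermomenta.) -/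

import Mathlib

noncomputable section

/-- The null embedding of the celestial sphere into the light-cone of Minkowski space. -/
def Q (z : ℂ) : Fin 4 → ℝ :=
  ![-1 - z.re ^ 2 - z.im ^ 2, 2 * z.re, 2 * z.im, 1 - z.re ^ 2 - z.im ^ 2]

/-- The contraction `p·Q(z) = Σ_μ pᵘ Qᵘ(z)`. -/
def dotQ (p : Fin 4 → ℝ) (z : ℂ) : ℝ := ∑ μ : Fin 4, p μ * Q z μ

/-- The Minkowski bilinear form on `ℝ⁴`. -/
def mink (u v : Fin 4 → ℝ) : ℝ :=
  -(u 0 * v 0) + u 1 * v 1 + u 2 * v 2 + u 3 * v 3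

/-- The soft part produced when adding two hard supermomenta:
`S = (p₁·Q) ln|p₁·Q| + (p₂·Q) ln|p₂·Q| − (p₃·Q) ln|p₃·Q|` with `p₃ = p₁ + p₂`. -/
def Ssum (p₁ p₂ : Fin 4 → ℝ) (z : ℂ) : ℝ :=
  dotQ p₁ z * Real.log |dotQ p₁ z| + dotQ p₂ z * Real.log |dotQ p₂ z|
    - dotQ (p₁ + p₂) z * Real.log |dotQ (p₁ + p₂) z|

lemma dotQ_eq (p : Fin 4 → ℝ) (z : ℂ) :
    dotQ p z = p 0 * (-1 - z.re ^ 2 - z.im ^ 2) + p 1 * (2 * z.re)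
      + p 2 * (2 * z.im) + p 3 * (1 - z.re ^ 2 - z.im ^ 2) := by
  simp [dotQ, Q, Fin.sum_univ_four]

lemma dotQ_neg (p : Fin 4 → ℝ) (h : mink p p < 0) (h0 : 0 < p 0) (z : ℂ) :
    dotQ p z < 0 := by
  rw [dotQ_eq]
  have hm : p 1 ^ 2 + p 2 ^ 2 + p 3 ^ 2 < p 0 ^ 2 := by
    simp only [mink] at h; nlinarith
  set x := z.re; set y := z.im
  nlinarith [sq_nonneg (p 1 * (2*y) - p 2 * (2*x)),
    sq_nonneg (p 1 * (1 - x^2 - y^2) - p 3 * (2*x)),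
    sq_nonneg (p 2 * (1 - x^2 - y^2) - p 3 * (2*y)),
    sq_nonneg (x^2 + y^2), sq_nonneg x, sq_nonneg y,
    mul_pos h0 (show (0:ℝ) < 1 + x^2 + y^2 by positivity),
    mul_pos (mul_pos h0 h0) (show (0:ℝ) < (1 + x^2 + y^2)^2 by positivity)]

lemma dotQ_contDiff (p : Fin 4 → ℝ) : ContDiff ℝ (⊤ : ℕ∞) (fun z => dotQ p z) := by
  have h : (fun z : ℂ => dotQ p z) = fun z => p 0 * (-1 - z.re ^ 2 - z.im ^ 2) + p 1 * (2 * z.re)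
      + p 2 * (2 * z.im) + p 3 * (1 - z.re ^ 2 - z.im ^ 2) := funext fun z => dotQ_eq p z
  rw [h]
  have hre : ContDiff ℝ (⊤ : ℕ∞) (fun z : ℂ => z.re) := Complex.reCLM.contDiff
  have him : ContDiff ℝ (⊤ : ℕ∞) (fun z : ℂ => z.im) := Complex.imCLM.contDiff
  exact (contDiff_const.mul (((contDiff_const.sub (hre.pow 2)).sub (him.pow 2)))).add
      ((contDiff_const.mul (contDiff_const.mul hre))) |>.add
      (contDiff_const.mul (contDiff_const.mul him)) |>.add
      (contDiff_const.mul ((contDiff_const.sub (hre.pow 2)).sub (him.pow 2)))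

lemma mulLog_contDiff (f : ℂ → ℝ) (hf : ContDiff ℝ (⊤ : ℕ∞) f) (hne : ∀ z, f z ≠ 0) :
    ContDiff ℝ (⊤ : ℕ∞) (fun z => f z * Real.log |f z|) := by
  have h : (fun z => f z * Real.log |f z|) = fun z => f z * Real.log (f z) := by
    funext z; rw [Real.log_abs]
  rw [h, contDiff_iff_contDiffAt]
  intro z
  exact (hf.contDiffAt).mul ((Real.contDiffAt_log.mpr (hne z)).comp z hf.contDiffAt)

lemma dotQ_add (p q : Fin 4 → ℝ) (z : ℂ) : dotQ (p + q) z = dotQ p z + dotQ q z := by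
  simp only [dotQ_eq, Pi.add_apply]; ring

lemma Ssum_contDiff (p₁ p₂ : Fin 4 → ℝ)
    (h₁ : ∀ z, dotQ p₁ z ≠ 0) (h₂ : ∀ z, dotQ p₂ z ≠ 0)
    (h₃ : ∀ z, dotQ (p₁ + p₂) z ≠ 0) : ContDiff ℝ (⊤ : ℕ∞) (Ssum p₁ p₂) := by
  exact ((mulLog_contDiff _ (dotQ_contDiff p₁) h₁).add
    (mulLog_contDiff _ (dotQ_contDiff p₂) h₂)).sub
    (mulLog_contDiff _ (dotQ_contDiff (p₁ + p₂)) h₃)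

/-- Flip the sign of the last two components; this realizes `z ↦ 1/z` on the cone. -/
def pflip (p : Fin 4 → ℝ) : Fin 4 → ℝ := ![p 0, p 1, -p 2, -p 3]

lemma flip_add (p q : Fin 4 → ℝ) : pflip (p + q) = pflip p + pflip q := by
  funext μ
  fin_cases μ <;> simp [pflip] <;> ring

lemma flip_mink (p : Fin 4 → ℝ) : mink (pflip p) (pflip p) = mink p p := by
  simp [mink, pflip]

lemma flip_zero (p : Fin 4 → ℝ) : pflip p 0 = p 0 := by simp [pflip]

lemma dotQ_flip (p : Fin 4 → ℝ) (w : ℂ) (hw : w ≠ 0) :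
    dotQ (pflip p) w = Complex.normSq w * dotQ p w⁻¹ := by
  have hn : Complex.normSq w ≠ 0 := (Complex.normSq_pos.mpr hw).ne'
  have hn' : w.re * w.re + w.im * w.im ≠ 0 := by rwa [Complex.normSq_apply] at hn
  rw [dotQ_eq, dotQ_eq]
  simp only [pflip, Matrix.cons_val_zero, Matrix.cons_val_one, Matrix.head_cons,
    Matrix.cons_val_two, Matrix.tail_cons, Matrix.cons_val_three,
    Complex.inv_re, Complex.inv_im, Complex.normSq_apply]
  have hn'' : w.re ^ 2 + w.im ^ 2 ≠ 0 := by rwa [sq, sq]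
  field_simp
  ring

/-- For two future-directed timelike momenta `p₁, p₂`, the soft part `S` of the sum of
the corresponding massive hard supermomenta is `C^∞` on all of `ℂ` and is a smooth
weight-one density: its chart-at-infinity expression `Ŝ(ẑ) = |ẑ|² S(1/ẑ)` extends
smoothly through `ẑ = 0`. -/
theorem soft_part_smooth_density (p₁ p₂ : Fin 4 → ℝ)
    (h₁ : mink p₁ p₁ < 0) (h₂ : mink p₂ p₂ < 0)
    (h₁0 : 0 < p₁ 0) (h₂0 : 0 < p₂ 0) :
    ContDiff ℝ (⊤ : ℕ∞) (Ssum p₁ p₂) ∧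
    ∃ Shat : ℂ → ℝ, ContDiff ℝ (⊤ : ℕ∞) Shat ∧
      ∀ w : ℂ, w ≠ 0 → Shat w = Complex.normSq w * Ssum p₁ p₂ w⁻¹ := by
  have key : ∀ p : Fin 4 → ℝ, mink p p < 0 → 0 < p 0 → ∀ z, dotQ p z ≠ 0 :=
    fun p hp hp0 z => ne_of_lt (dotQ_neg p hp hp0 z)
  have h1 := key p₁ h₁ h₁0
  have h2 := key p₂ h₂ h₂0
  have h3 : ∀ z, dotQ (p₁ + p₂) z ≠ 0 := fun z => by
    rw [dotQ_add]
    exact ne_of_lt (add_neg (dotQ_neg p₁ h₁ h₁0 z) (dotQ_neg p₂ h₂ h₂0 z))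
  refine ⟨Ssum_contDiff p₁ p₂ h1 h2 h3, Ssum (pflip p₁) (pflip p₂), ?_, ?_⟩
  · refine Ssum_contDiff _ _ ?_ ?_ ?_
    · exact fun z => ne_of_lt (dotQ_neg _ (by rw [flip_mink]; exact h₁)
        (by rw [flip_zero]; exact h₁0) z)
    · exact fun z => ne_of_lt (dotQ_neg _ (by rw [flip_mink]; exact h₂)
        (by rw [flip_zero]; exact h₂0) z)
    · intro z
      rw [dotQ_add]
      exact ne_of_lt (add_neg
        (dotQ_neg _ (by rw [flip_mink]; exact h₁) (by rw [flip_zero]; exact h₁0) z)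
        (dotQ_neg _ (by rw [flip_mink]; exact h₂) (by rw [flip_zero]; exact h₂0) z))
  · intro w hw
    have hn : (0:ℝ) < Complex.normSq w := Complex.normSq_pos.mpr hw
    have hn' : Complex.normSq w ≠ 0 := ne_of_gt hn
    set n := Complex.normSq w with hndef
    have e₁ : dotQ p₁ w⁻¹ = dotQ (pflip p₁) w / n := by
      rw [dotQ_flip p₁ w hw]; field_simp; rfl
    have e₂ : dotQ p₂ w⁻¹ = dotQ (pflip p₂) w / n := by
      rw [dotQ_flip p₂ w hw]; field_simp; rfl
    have e₃ : dotQ (p₁ + p₂) w⁻¹ = dotQ (pflip p₁ + pflip p₂) w / n := by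
      rw [← flip_add, dotQ_flip (p₁ + p₂) w hw]; field_simp; rfl
    have a₁ : dotQ (pflip p₁) w ≠ 0 := ne_of_lt (dotQ_neg _ (by rw [flip_mink]; exact h₁)
        (by rw [flip_zero]; exact h₁0) w)
    have a₂ : dotQ (pflip p₂) w ≠ 0 := ne_of_lt (dotQ_neg _ (by rw [flip_mink]; exact h₂)
        (by rw [flip_zero]; exact h₂0) w)
    have a₃ : dotQ (pflip p₁ + pflip p₂) w ≠ 0 := by
      rw [dotQ_add]
      exact ne_of_lt (add_neg
        (dotQ_neg _ (by rw [flip_mink]; exact h₁) (by rw [flip_zero]; exact h₁0) w)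
        (dotQ_neg _ (by rw [flip_mink]; exact h₂) (by rw [flip_zero]; exact h₂0) w))
    have labs : ∀ x : ℝ, x ≠ 0 → Real.log |x / n| = Real.log |x| - Real.log n := by
      intro x hx
      rw [abs_div, Real.log_div (abs_ne_zero.mpr hx) (abs_ne_zero.mpr hn'),
        abs_of_pos hn]
    have hadd : dotQ (pflip p₁ + pflip p₂) w = dotQ (pflip p₁) w + dotQ (pflip p₂) w :=
      dotQ_add _ _ w
    simp only [Ssum, e₁, e₂, e₃]
    rw [labs _ a₁, labs _ a₂, labs _ a₃, hadd]
    field_simp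
    ring
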